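/- Let p be a prime with p ≡ 3 (mod 4) and let d ∈ F_p with d ≠ 0 and d ≠ 1. Then N_d = p + 1 when χ(d) = −1 (respectively N_d = p − 3 when χ(d) = 1) if and only if the supersingularity condition Σ_{j=0}^{(p−1)/2} binom((p−1)/2, j)² · d^j = 0 holds in F_p. Equivalently: N_d = p − 1 − 2·χ(d) ⟺ Σ_{j=0}^{(p−1)/2} binom((p−1)/2, j)² · d^j = 0 in F_p. -/

import Mathlib

open Finset

/-- The number of affine points of the Edwards curve `x² + y² = 1 + d x² y²` over `ZMod p`. -/
noncomputable def edwardsCard (p : ℕ) (d : ZMod p) : ℕ :=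
  Nat.card {xy : ZMod p × ZMod p // xy.1 ^ 2 + xy.2 ^ 2 = 1 + d * xy.1 ^ 2 * xy.2 ^ 2}

/-!
Counting `y` fibrewise, there are `1 + χ((1 - x²)(1 - d x²))` points above each `x` with
`d x² ≠ 1` and none above the `1 + χ(d)` roots of `d x² = 1`, so `N_d = p - 1 - χ(d) + T` with
`T = ∑ₓ χ((1 - x²)(1 - d x²))`. By Euler's criterion `T ≡ ∑ₓ ((1 - x²)(1 - d x²))^m` for
`m = (p - 1) / 2`, and a power sum over `𝔽_p` only sees the coefficients of `x^(p-1)` and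
`x^(2(p-1))`: these are `(-1)^m S`, with `S = ∑ⱼ C(m, j)² dʲ`, and `d^m ≡ χ(d)`. So
`T + χ(d) ≡ -(-1)^m S` mod `p`, and since `|T + χ(d)| < p` (the terms at `x = ±1` vanish),
`N_d = p - 1 - 2χ(d)` exactly when `S = 0` in `𝔽_p`.
-/

open Polynomial

namespace Polynomial
variable {R : Type*} [CommRing R]

theorem coeff_one_add_C_mul_X_pow (a : R) (n k : ℕ) :
    ((1 + C a * X) ^ n).coeff k = n.choose k * a ^ k := by
  rw [show (1 + C a * X) ^ n = ((1 + X) ^ n).comp (C a * X) by simp, comp_C_mul_X_coeff,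
    coeff_one_add_X_pow]

theorem natDegree_one_add_C_mul_X_pow_le (a : R) (n : ℕ) :
    ((1 + C a * X) ^ n).natDegree ≤ n := by
  compute_degree!

theorem coeff_one_add_C_mul_X_pow_mul_one_add_C_mul_X_pow (a b : R) (n : ℕ) :
    ((1 + C a * X) ^ n * (1 + C b * X) ^ n).coeff n =
      ∑ k ∈ range (n + 1), (n.choose k : R) ^ 2 * a ^ (n - k) * b ^ k := by
  rw [coeff_mul, ← Nat.sum_antidiagonal_swap, Nat.sum_antidiagonal_eq_sum_range_succ_mk]
  refine sum_congr rfl fun k hk => ?_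
  simp only [Prod.swap_prod_mk, coeff_one_add_C_mul_X_pow,
    Nat.choose_symm (Nat.le_of_lt_succ (mem_range.mp hk))]
  ring

end Polynomial

namespace FiniteField
variable {K : Type*} [Field K] [Fintype K]

theorem sum_pow_eq_ite (n : ℕ) :
    ∑ x : K, x ^ n = if n ≠ 0 ∧ Fintype.card K - 1 ∣ n then -1 else 0 := by
  classical
  rcases eq_or_ne n 0 with rfl | hn
  · simp
  rw [Fintype.sum_eq_add_sum_subtype_ne _ 0, zero_pow hn, zero_add,
    ← (unitsEquivNeZero (G₀ := K)).sum_comp]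
  simp_rw [unitsEquivNeZero_apply_coe]
  rw [sum_pow_units, if_congr (and_iff_right hn) rfl rfl]

theorem sum_eval_eq_neg_coeff {P : K[X]} (hP : P.natDegree ≤ 2 * (Fintype.card K - 1)) :
    ∑ x : K, P.eval x =
      -(P.coeff (Fintype.card K - 1) + P.coeff (2 * (Fintype.card K - 1))) := by
  have hq : 1 < Fintype.card K := Fintype.one_lt_card
  generalize hq' : Fintype.card K - 1 = r at hP
  have hr : 1 ≤ r := by omega
  simp_rw [eval_eq_sum_range' (Nat.lt_succ_of_le hP), sum_comm (γ := K), ← mul_sum,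
    sum_pow_eq_ite, hq']
  rw [sum_eq_add_of_mem r (2 * r) (mem_range.mpr (by omega)) (mem_range.mpr (by omega)) (by omega)]
  · rw [if_pos ⟨by omega, dvd_refl r⟩, if_pos ⟨by omega, dvd_mul_left r 2⟩]
    ring
  · intro n hn hne
    rw [if_neg, mul_zero]
    rintro ⟨hn0, k, rfl⟩
    rw [mem_range] at hn
    have : k < 3 := by by_contra! hk; nlinarith
    interval_cases k <;> omega

theorem sum_one_sub_sq_mul_one_sub_mul_sq_pow {m : ℕ} (hq : Fintype.card K = 2 * m + 1) (d : K) :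
    ∑ x : K, ((1 - x ^ 2) * (1 - d * x ^ 2)) ^ m =
      -((-1) ^ m * ∑ k ∈ range (m + 1), (m.choose k : K) ^ 2 * d ^ k + d ^ m) := by
  set Q : K[X] := (1 + C (-1) * X) ^ m * (1 + C (-d) * X) ^ m
  have hQ : Q.natDegree ≤ m + m :=
    natDegree_mul_le_of_le (natDegree_one_add_C_mul_X_pow_le _ _)
      (natDegree_one_add_C_mul_X_pow_le _ _)
  have heval (x : K) : (expand K 2 Q).eval x = ((1 - x ^ 2) * (1 - d * x ^ 2)) ^ m := by
    simp [Q, mul_pow, sub_eq_add_neg]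
  have hmiddle : Q.coeff m = (-1) ^ m * ∑ k ∈ range (m + 1), (m.choose k : K) ^ 2 * d ^ k := by
    rw [coeff_one_add_C_mul_X_pow_mul_one_add_C_mul_X_pow, mul_sum]
    refine sum_congr rfl fun k hk => ?_
    have hkm : m - k + k = m := Nat.sub_add_cancel (Nat.le_of_lt_succ (mem_range.mp hk))
    calc _ = (-1) ^ (m - k + k) * ((m.choose k : K) ^ 2 * d ^ k) := by
          rw [pow_add, neg_pow d]; ring
      _ = _ := by rw [hkm]
  have htop : Q.coeff (m + m) = d ^ m := by
    rw [coeff_mul_add_eq_of_natDegree_le (natDegree_one_add_C_mul_X_pow_le _ _)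
      (natDegree_one_add_C_mul_X_pow_le _ _), coeff_one_add_C_mul_X_pow,
      coeff_one_add_C_mul_X_pow, Nat.choose_self, Nat.cast_one, one_mul, one_mul, ← mul_pow]
    simp
  simp_rw [← heval]
  rw [sum_eval_eq_neg_coeff (by rw [natDegree_expand, hq]; omega), hq,
    show 2 * m + 1 - 1 = 2 * m by omega, coeff_expand two_pos, coeff_expand two_pos]
  simp [hmiddle, htop, show 2 * (2 * m) / 2 = m + m by omega]

end FiniteField

section EdwardsCurve
variable {F : Type*} [Field F] [Fintype F] [DecidableEq F]

theorem abs_quadraticChar_le_one (a : F) : |(quadraticChar F a : ℤ)| ≤ 1 := by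
  rcases quadraticChar_isQuadratic F a with h | h | h <;> simp [h]

theorem card_mul_sq_eq (hF : ringChar F ≠ 2) {a : F} (ha : a ≠ 0) (b : F) :
    (#{y : F | a * y ^ 2 = b} : ℤ) = quadraticChar F (a * b) + 1 := by
  have hsqrt :
      filter (fun y : F => a * y ^ 2 = b) univ = filter (fun y => y ^ 2 = b / a) univ := by
    simp only [eq_div_iff ha, mul_comm a]
  have hchar : quadraticChar F (a * b) = quadraticChar F (b / a) := by
    rw [show a * b = b / a * a ^ 2 by field_simp, map_mul, quadraticChar_sq_one' ha, mul_one]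
  rw [hsqrt, hchar, ← quadraticChar_card_sqrts hF, Set.toFinset_ofPred]

theorem card_edwards_fiber (hF : ringChar F ≠ 2) {d : F} (hd1 : d ≠ 1) (x : F) :
    (#{y : F | x ^ 2 + y ^ 2 = 1 + d * x ^ 2 * y ^ 2} : ℤ) =
      quadraticChar F ((1 - x ^ 2) * (1 - d * x ^ 2)) + 1 - if d * x ^ 2 = 1 then 1 else 0 := by
  by_cases hx : d * x ^ 2 = 1
  · have hx2 : x ^ 2 ≠ 1 := fun h => hd1 (by simpa [h] using hx)
    have hempty : filter (fun y : F => x ^ 2 + y ^ 2 = 1 + d * x ^ 2 * y ^ 2) univ = ∅ := by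
      refine filter_false_of_mem fun y _ h => hx2 ?_
      rw [hx] at h
      linear_combination h
    rw [hempty, hx, if_pos rfl, sub_self, mul_zero, quadraticChar_zero, card_empty]
    norm_num
  · have hfib : filter (fun y : F => x ^ 2 + y ^ 2 = 1 + d * x ^ 2 * y ^ 2) univ =
        filter (fun y => (1 - d * x ^ 2) * y ^ 2 = 1 - x ^ 2) univ := by
      refine filter_congr fun y _ => ?_
      constructor <;> intro h <;> linear_combination h
    rw [hfib, card_mul_sq_eq hF (sub_ne_zero.mpr (Ne.symm hx)), if_neg hx, mul_comm]
    ring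

theorem card_edwards (hF : ringChar F ≠ 2) {d : F} (hd0 : d ≠ 0) (hd1 : d ≠ 1) :
    (Nat.card {xy : F × F // xy.1 ^ 2 + xy.2 ^ 2 = 1 + d * xy.1 ^ 2 * xy.2 ^ 2} : ℤ) =
      Fintype.card F - 1 - quadraticChar F d +
        ∑ x : F, quadraticChar F ((1 - x ^ 2) * (1 - d * x ^ 2)) := by
  have hfibres : Nat.card {xy : F × F // xy.1 ^ 2 + xy.2 ^ 2 = 1 + d * xy.1 ^ 2 * xy.2 ^ 2} =
      ∑ x : F, #{y : F | x ^ 2 + y ^ 2 = 1 + d * x ^ 2 * y ^ 2} := by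
    simp only [Nat.card_eq_fintype_card, Fintype.card_subtype, card_filter, Fintype.sum_prod_type]
  have hbad : ∑ x : F, (if d * x ^ 2 = 1 then 1 else 0 : ℤ) = quadraticChar F d + 1 := by
    rw [sum_boole, card_mul_sq_eq hF hd0, mul_one]
  rw [hfibres, Nat.cast_sum]
  simp_rw [card_edwards_fiber hF hd1]
  rw [sum_sub_distrib, sum_add_distrib, hbad]
  simp only [sum_const, card_univ, nsmul_eq_mul, mul_one]
  ring

theorem abs_sum_quadraticChar_edwards_le (hF : ringChar F ≠ 2) (d : F) :
    |∑ x : F, (quadraticChar F ((1 - x ^ 2) * (1 - d * x ^ 2)) : ℤ)| ≤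
      Fintype.card F - 2 := by
  have hvanish : ∀ x ∈ univ, x ∉ univ \ {1, -1} →
      (quadraticChar F ((1 - x ^ 2) * (1 - d * x ^ 2)) : ℤ) = 0 := by
    intro x _ hx
    have hx2 : x ^ 2 = 1 := by
      rw [mem_sdiff, not_and_not_right, mem_insert, mem_singleton] at hx
      rcases hx (mem_univ x) with rfl | rfl <;> ring
    rw [hx2, sub_self, zero_mul, quadraticChar_zero]
  have hcard : (#(univ \ {1, -1} : Finset F) : ℤ) = Fintype.card F - 2 := by
    rw [card_sdiff_of_subset (subset_univ _),
      card_pair_eq_two_iff.mpr (Ring.neg_one_ne_one_of_char_ne_two hF).symm, card_univ,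
      Nat.cast_sub (Fintype.one_lt_card_iff_nontrivial.mpr inferInstance)]
    norm_num
  rw [← sum_subset (subset_univ _) hvanish, ← hcard]
  calc _ ≤ ∑ x ∈ univ \ {1, -1}, |(quadraticChar F ((1 - x ^ 2) * (1 - d * x ^ 2)) : ℤ)| :=
        abs_sum_le_sum_abs _ _
    _ ≤ ∑ _x ∈ univ \ {1, -1}, (1 : ℤ) := sum_le_sum fun x _ => abs_quadraticChar_le_one _
    _ = _ := by simp

end EdwardsCurve

theorem ZMod.intCast_eq_zero_iff_of_abs_lt {p : ℕ} {n : ℤ} (h : |n| < p) :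
    (n : ZMod p) = 0 ↔ n = 0 :=
  ⟨fun h0 => Int.eq_zero_of_abs_lt_dvd ((ZMod.intCast_zmod_eq_zero_iff_dvd n p).mp h0) h,
    fun h0 => by rw [h0, Int.cast_zero]⟩

theorem legendreSym_val_eq_quadraticChar (p : ℕ) [Fact p.Prime] (a : ZMod p) :
    legendreSym p (a.val : ℤ) = quadraticChar (ZMod p) a := by
  rw [legendreSym, Int.cast_natCast, ZMod.natCast_zmod_val]

theorem stmt2_general (p : ℕ) [Fact p.Prime] (d : ZMod p)
    (hd0 : d ≠ 0) (hd1 : d ≠ 1) :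
    ((edwardsCard p d : ℤ) = (p : ℤ) - 1 - 2 * legendreSym p (d.val : ℤ)) ↔
      ∑ j ∈ range ((p - 1) / 2 + 1),
        (((p - 1) / 2).choose j : ZMod p) ^ 2 * d ^ j = 0 := by
  have hp2 : p ≠ 2 := by rintro rfl; fin_cases d; exacts [hd0 rfl, hd1 rfl]
  have hF : ringChar (ZMod p) ≠ 2 := by rwa [ZMod.ringChar_zmod_n]
  obtain ⟨m, hm⟩ := (Fact.out : p.Prime).eq_two_or_odd'.resolve_left hp2
  have hcard : Fintype.card (ZMod p) = 2 * m + 1 := by rw [ZMod.card, hm]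
  rw [show (p - 1) / 2 = m by omega]
  set S := ∑ j ∈ range (m + 1), (m.choose j : ZMod p) ^ 2 * d ^ j
  set T := ∑ x : ZMod p, (quadraticChar (ZMod p) ((1 - x ^ 2) * (1 - d * x ^ 2)) : ℤ)
  have hN : (edwardsCard p d : ℤ) = p - 1 - quadraticChar (ZMod p) d + T := by
    rw [edwardsCard, card_edwards hF hd0 hd1, ZMod.card]
  have hbound : |T + quadraticChar (ZMod p) d| < p := by
    have := abs_sum_quadraticChar_edwards_le hF d
    rw [ZMod.card] at this
    linarith [abs_add_le T (quadraticChar (ZMod p) d), abs_quadraticChar_le_one d]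
  have hEuler : ((T + quadraticChar (ZMod p) d : ℤ) : ZMod p) = -((-1) ^ m * S) := by
    push_cast [T, quadraticChar_eq_pow_of_char_ne_two' hF, hcard,
      show (2 * m + 1) / 2 = m by omega]
    rw [FiniteField.sum_one_sub_sq_mul_one_sub_mul_sq_pow hcard]
    ring
  calc _ ↔ T + quadraticChar (ZMod p) d = 0 := by
        rw [hN, legendreSym_val_eq_quadraticChar]; constructor <;> intro h <;> linarith
    _ ↔ ((T + quadraticChar (ZMod p) d : ℤ) : ZMod p) = 0 :=
        (ZMod.intCast_eq_zero_iff_of_abs_lt hbound).symm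
    _ ↔ S = 0 := by
        rw [hEuler, neg_eq_zero, mul_eq_zero, or_iff_right (pow_ne_zero _ (by norm_num))]

theorem stmt2 (p : ℕ) [Fact p.Prime] (hp : p % 4 = 3) (d : ZMod p)
    (hd0 : d ≠ 0) (hd1 : d ≠ 1) :
    ((edwardsCard p d : ℤ) = (p : ℤ) - 1 - 2 * legendreSym p (d.val : ℤ)) ↔
      ∑ j ∈ range ((p - 1) / 2 + 1),
        (((p - 1) / 2).choose j : ZMod p) ^ 2 * d ^ j = 0 :=
  stmt2_general p d hd0 hd1
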